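/- Let g be a short sl₂-Lie superalgebra with M = {α ∈ g : hα = α} and triple product (m,n,r) := −[[m, f n], r]. Then the triple product satisfies: (m,n,s) = (−1)^{|m||n|}(n,m,s) + (m⋆n)•s for all homogeneous m, n, s ∈ M, where m⋆n = [m,n] and a•s = [a, f s]. -/

import Mathlib

/-! Since `h` acts by derivations, `[m,n]` has `h`-weight 2 and `[[m,n],s]` has weight 3; weights
of a short `sl₂`-algebra lie in `{-2,…,2}` and eigenspaces are independent, so `[[m,n],s] = 0`.
As `f` is a derivation, this gives `[f[m,n], s] = -[[m,n], f s]`, and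
`[m, f n] = f[m,n] + (-1)^{|m||n|} [n, f m]` by antisymmetry; bracketing the latter with `s`
is the identity. -/

/-- The Koszul sign `(-1)^{ij}` for parities `i j : ZMod 2`. -/
noncomputable def sg (i j : ZMod 2) : ℂ := (-1 : ℂ) ^ (i.val * j.val)

/-- A short `sl₂`-Lie superalgebra: a Z/2-graded complex Lie superalgebra `(G, B)`
together with operators `E F H` satisfying the `sl₂` relations, acting by even
derivations, such that `G` is spanned by `H`-eigenvectors with eigenvalues in
`{-2,-1,0,1,2}` (which, over `ℂ`, is exactly the condition that `G` decomposes as an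
`sl₂`-module into copies of the adjoint, the natural and the trivial representations,
i.e. `G ≅ sl₂⊗J ⊕ V⊗M ⊕ D`). -/
structure ShortSL2 {G : Type} [AddCommGroup G] [Module ℂ G]
    (gr : ZMod 2 → Submodule ℂ G)
    (B : G →ₗ[ℂ] G →ₗ[ℂ] G)
    (E F H : G →ₗ[ℂ] G) : Prop where
  bracket_grade : ∀ i j : ZMod 2, ∀ a ∈ gr i, ∀ b ∈ gr j, B a b ∈ gr (i + j)
  antisymm : ∀ i j : ZMod 2, ∀ a ∈ gr i, ∀ b ∈ gr j, B a b = -(sg i j • B b a)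
  jacobi : ∀ i j : ZMod 2, ∀ a ∈ gr i, ∀ b ∈ gr j, ∀ c : G,
      B a (B b c) = B (B a b) c + sg i j • B b (B a c)
  grade_spans : ∀ x : G, ∃ x0 x1 : G, x0 ∈ gr 0 ∧ x1 ∈ gr 1 ∧ x = x0 + x1
  rel_HE : H ∘ₗ E - E ∘ₗ H = 2 • E
  rel_HF : H ∘ₗ F - F ∘ₗ H = -(2 • F)
  rel_EF : E ∘ₗ F - F ∘ₗ E = H
  derE : ∀ x y : G, E (B x y) = B (E x) y + B x (E y)
  derF : ∀ x y : G, F (B x y) = B (F x) y + B x (F y)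
  derH : ∀ x y : G, H (B x y) = B (H x) y + B x (H y)
  evenE : ∀ i : ZMod 2, ∀ x ∈ gr i, E x ∈ gr i
  evenF : ∀ i : ZMod 2, ∀ x ∈ gr i, F x ∈ gr i
  evenH : ∀ i : ZMod 2, ∀ x ∈ gr i, H x ∈ gr i
  short : ∀ x : G, ∃ x2 x1 x0 y1 y2 : G,
      H x2 = (2 : ℂ) • x2 ∧ H x1 = x1 ∧ H x0 = 0 ∧
      H y1 = (-1 : ℂ) • y1 ∧ H y2 = (-2 : ℂ) • y2 ∧ x = x2 + x1 + x0 + y1 + y2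

/-- The triple product `(m,n,r) := −[[m, f n], r]` on `M = {m : H m = m}`. -/
noncomputable def trip {G : Type} [AddCommGroup G] [Module ℂ G]
    (B : G →ₗ[ℂ] G →ₗ[ℂ] G) (F : G →ₗ[ℂ] G) (m n r : G) : G :=
  -(B (B m (F n)) r)

namespace ShortSL2

variable {G : Type} [AddCommGroup G] [Module ℂ G] {gr : ZMod 2 → Submodule ℂ G}
  {B : G →ₗ[ℂ] G →ₗ[ℂ] G} {E F H : G →ₗ[ℂ] G}

open Module.End in
theorem eq_zero_of_apply_eq_smul (h : ShortSL2 gr B E F H) {μ : ℂ}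
    (hμ : μ ∉ ({2, 1, 0, -1, -2} : Set ℂ)) {x : G} (hx : H x = μ • x) : x = 0 := by
  have hsum : x ∈ ⨆ ν ∈ ({2, 1, 0, -1, -2} : Set ℂ), eigenspace H ν := by
    have mem : ∀ ν ∈ ({2, 1, 0, -1, -2} : Set ℂ), ∀ y, H y = ν • y →
        y ∈ ⨆ ν ∈ ({2, 1, 0, -1, -2} : Set ℂ), eigenspace H ν := fun ν hν y hy =>
      Submodule.mem_iSup_of_mem ν (Submodule.mem_iSup_of_mem hν (mem_eigenspace_iff.2 hy))
    obtain ⟨x2, x1, x0, y1, y2, h2, h1, h0, hm1, hm2, rfl⟩ := h.short x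
    refine add_mem (add_mem (add_mem (add_mem ?_ ?_) ?_) ?_) ?_
    · exact mem 2 (by simp) _ h2
    · exact mem 1 (by simp) _ (by rw [h1, one_smul])
    · exact mem 0 (by simp) _ (by rw [h0, zero_smul])
    · exact mem (-1) (by simp) _ hm1
    · exact mem (-2) (by simp) _ hm2
  exact Submodule.disjoint_def.1 ((eigenspaces_iSupIndep H).disjoint_biSup hμ) x
    (mem_eigenspace_iff.2 hx) hsum

theorem apply_bracket_eq_add_smul (h : ShortSL2 gr B E F H) {a b : ℂ} {x y : G}
    (hx : H x = a • x) (hy : H y = b • y) : H (B x y) = (a + b) • B x y := by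
  rw [h.derH, hx, hy, map_smul, LinearMap.smul_apply, map_smul, add_smul]

theorem bracket_bracket_eq_zero (h : ShortSL2 gr B E F H) {m n s : G}
    (hm : H m = m) (hn : H n = n) (hs : H s = s) : B (B m n) s = 0 := by
  have weight_one : ∀ x, H x = x → H x = (1 : ℂ) • x := fun x hx => by rw [hx, one_smul]
  refine h.eq_zero_of_apply_eq_smul (μ := 1 + 1 + 1) (by norm_num) ?_
  exact h.apply_bracket_eq_add_smul
    (h.apply_bracket_eq_add_smul (weight_one m hm) (weight_one n hn)) (weight_one s hs)

theorem bracket_F_right (h : ShortSL2 gr B E F H) {i j : ZMod 2} {m n : G}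
    (hm : m ∈ gr i) (hn : n ∈ gr j) : B m (F n) = F (B m n) + sg i j • B n (F m) := by
  rw [h.derF, h.antisymm i j (F m) (h.evenF i m hm) n hn]
  abel

theorem bracket_F_left_of_bracket_eq_zero (h : ShortSL2 gr B E F H) {a s : G}
    (has : B a s = 0) : B (F a) s = -B a (F s) := by
  have := h.derF a s
  rw [has, map_zero] at this
  exact eq_neg_of_add_eq_zero_left this.symm

end ShortSL2

/-- In a short `sl₂`-Lie superalgebra,
`(m,n,s) = (−1)^{|m||n|}(n,m,s) + (m⋆n)•s`, with `m⋆n = [m,n]` and `a•s = [a, f s]`. -/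
theorem shortSL2_trip_SJT4
    {G : Type} [AddCommGroup G] [Module ℂ G]
    (gr : ZMod 2 → Submodule ℂ G)
    (B : G →ₗ[ℂ] G →ₗ[ℂ] G) (E F H : G →ₗ[ℂ] G)
    (h : ShortSL2 gr B E F H) :
    ∀ pm pn ps : ZMod 2, ∀ m ∈ gr pm, ∀ n ∈ gr pn, ∀ s ∈ gr ps,
      H m = m → H n = n → H s = s →
      trip B F m n s = sg pm pn • trip B F n m s + B (B m n) (F s) := by
  intro pm pn _ m hm n hn s _ hHm hHn hHs
  have hFmn : B (F (B m n)) s = -B (B m n) (F s) :=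
    h.bracket_F_left_of_bracket_eq_zero (h.bracket_bracket_eq_zero hHm hHn hHs)
  simp only [trip, h.bracket_F_right hm hn, map_add, map_smul, LinearMap.add_apply,
    LinearMap.smul_apply, hFmn, smul_neg]
  abel
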